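/- For θ > 0 and n ≥ 1, the function e on compositions of n defined by e(λ) = θ^ℓ · n!/[θ]_n · ∏_{j=1}^ℓ 1/Λ_j satisfies the recursion e(λ_1,...,λ_ℓ) = (w(n:λ_1)/(1 - w(n:0))) · e(λ_2,...,λ_ℓ), where w(n:m) = θ·C(n,m)·B(m+1, n-m+θ) and n = Λ_1. -/

import Mathlib

noncomputable def betaFn (a b : ℝ) : ℝ := ∫ t in (0:ℝ)..1, t ^ (a - 1) * (1 - t) ^ (b - 1)

noncomputable def risingFact (x : ℝ) (k : ℕ) : ℝ := ∏ i ∈ Finset.range k, (x + i)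

noncomputable def w (θ : ℝ) (n m : ℕ) : ℝ :=
  θ * (n.choose m : ℝ) * betaFn ((m : ℝ) + 1) ((n : ℝ) - (m : ℝ) + θ)

/-- ordered ESF as a function of the list of parts -/
noncomputable def eFun (θ : ℝ) (l : List ℕ) : ℝ :=
  θ ^ l.length * (l.sum.factorial : ℝ) / risingFact θ l.sum *
    ∏ j ∈ Finset.range l.length, (((l.drop j).sum : ℝ))⁻¹

/-!
Both sides are explicit. Evaluating the Beta integral at an integer first argument gives
`w(n:m) = θ C(n,m) m! / [n-m+θ]_{m+1}`, so `1 - w(n:0) = n/(n+θ)` and, for `n = a + s`,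
`w(n:a)/(1 - w(n:0)) = θ C(n,a) a! / (n [s+θ]_a)`. On the other side, removing the first part `a`
of a composition of `n` multiplies `e` by the same factor, because `n! = C(n,a) a! s!`,
`[θ]_n = [θ]_s [θ+s]_a`, and the tail sums of `a :: t` are `n` followed by those of `t`.
-/

open Nat

lemma risingFact_add (x : ℝ) (m k : ℕ) :
    risingFact x (m + k) = risingFact x m * risingFact (x + m) k := by
  simp only [risingFact, Finset.prod_range_add, Nat.cast_add, add_assoc]

lemma risingFact_succ (x : ℝ) (k : ℕ) : risingFact x (k + 1) = risingFact x k * (x + k) :=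
  Finset.prod_range_succ _ k

lemma betaFn_eq_betaIntegral (a b : ℝ) : (betaFn a b : ℂ) = Complex.betaIntegral a b := by
  rw [betaFn, Complex.betaIntegral, ← intervalIntegral.integral_ofReal]
  refine intervalIntegral.integral_congr fun x hx => ?_
  rw [Set.uIcc_of_le zero_le_one] at hx
  simp only [Complex.ofReal_mul, Complex.ofReal_cpow hx.1, Complex.ofReal_cpow (sub_nonneg.2 hx.2)]
  push_cast
  ring

lemma betaFn_natCast_add_one (m : ℕ) {c : ℝ} (hc : 0 < c) :
    betaFn ((m : ℝ) + 1) c = m ! / risingFact c (m + 1) := by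
  have h : (betaFn ((m : ℝ) + 1) c : ℂ) = Complex.betaIntegral c ((m : ℂ) + 1) := by
    rw [betaFn_eq_betaIntegral, Complex.betaIntegral_symm]
    push_cast
    rfl
  rw [Complex.betaIntegral_eval_nat_add_one_right (by simpa using hc) m] at h
  have hrising : ((risingFact c (m + 1) : ℝ) : ℂ) = ∏ j ∈ Finset.range (m + 1), ((c : ℂ) + j) := by
    simp [risingFact]
  rw [← hrising] at h
  exact_mod_cast h

lemma w_add_left {θ : ℝ} (hθ : 0 < θ) (m k : ℕ) :
    w θ (m + k) m = θ * ((m + k).choose m) * m ! / risingFact (θ + k) (m + 1) := by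
  have hc : ((m + k : ℕ) : ℝ) - m + θ = θ + k := by push_cast; ring
  rw [w, hc, betaFn_natCast_add_one m (by positivity), mul_div_assoc]

lemma w_zero {θ : ℝ} (hθ : 0 < θ) (n : ℕ) : w θ n 0 = θ / (θ + n) := by
  simpa [risingFact] using w_add_left hθ 0 n

lemma one_sub_w_zero {θ : ℝ} (hθ : 0 < θ) (n : ℕ) : 1 - w θ n 0 = n / (θ + n) := by
  rw [w_zero hθ, one_sub_div (by positivity), add_sub_cancel_left]

lemma w_div_one_sub_w_zero {θ : ℝ} (hθ : 0 < θ) (a s : ℕ) :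
    w θ (a + s) a / (1 - w θ (a + s) 0) =
      θ * ((a + s).choose a) * a ! / (risingFact (θ + s) a * ((a + s : ℕ) : ℝ)) := by
  have hlast : θ + s + a = θ + ((a + s : ℕ) : ℝ) := by push_cast; ring
  rw [w_add_left hθ, one_sub_w_zero hθ, risingFact_succ, hlast, ← div_div,
    div_div_div_cancel_right₀ (by positivity), div_div]

lemma eFun_cons (θ : ℝ) (a : ℕ) (t : List ℕ) :
    eFun θ (a :: t) =
      θ * ((a + t.sum).choose a) * a ! / (risingFact (θ + t.sum) a * ((a + t.sum : ℕ) : ℝ)) *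
        eFun θ t := by
  have hfact : ((a + t.sum) ! : ℝ) = (a + t.sum).choose a * a ! * (t.sum) ! := by
    rw [Nat.choose_symm_add]
    exact_mod_cast (Nat.add_choose_mul_factorial_mul_factorial a t.sum).symm
  have hrising : risingFact θ (a + t.sum) = risingFact θ t.sum * risingFact (θ + t.sum) a := by
    rw [add_comm a, risingFact_add]
  simp only [eFun, List.length_cons, List.sum_cons, Finset.prod_range_succ', List.drop_succ_cons,
    List.drop_zero, hfact, hrising]
  ring

theorem orderedESF_recursion_general (θ : ℝ) (hθ : 0 < θ) (a : ℕ) (t : List ℕ) :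
    eFun θ (a :: t) = (w θ (a + t.sum) a / (1 - w θ (a + t.sum) 0)) * eFun θ t := by
  rw [eFun_cons, w_div_one_sub_w_zero hθ]

theorem orderedESF_recursion (θ : ℝ) (hθ : 0 < θ) (a : ℕ) (ha : 0 < a) (t : List ℕ)
    (ht : ∀ x ∈ t, 0 < x) :
    eFun θ (a :: t) = (w θ (a + t.sum) a / (1 - w θ (a + t.sum) 0)) * eFun θ t :=
  orderedESF_recursion_general θ hθ a t
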